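/- Let φ ∈ S⁴ be a nonzero homogeneous quartic binary form and suppose there exists C ∈ sl₂(ℂ) with C·φ = 2φ. Then φ has a linear factor of multiplicity at least 3; that is, there exist linear forms α and β with φ = α³β. -/

import Mathlib

/-!
Write `φ = ∑ cₖ x^(4-k) y^k` and `C = [[a, b], [e, -a]]`. Then `C·φ = 2φ` is a tridiagonal
linear system in the `cₖ`. If `b ≠ 0` it determines `c₁, …, c₄` from `c₀`, and its last
equation says that `2` is one of the eigenvalues `±2μ, ±4μ` (`μ² = a² + be`) of `C` on
quartics; then `φ` is `(b x - (a + 1) y)³` times a linear form, or a multiple of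
`(2b x - (2a + 1) y)⁴`. Swapping `x` and `y` handles `e ≠ 0`, and for diagonal `C` the form
`φ` is a monomial `x^(4-k) y^k` with `k ≠ 2`.
-/

open MvPolynomial

/-- The action of `A ∈ sl₂(ℂ)` on `ℂ[x,y]` by derivations:
`A·f = −(a x + c y) ∂f/∂x − (b x + d y) ∂f/∂y` for `A = [[a,b],[c,d]]`. -/
noncomputable def sAct (A : Matrix (Fin 2) (Fin 2) ℂ) (f : MvPolynomial (Fin 2) ℂ) :
    MvPolynomial (Fin 2) ℂ :=
  -((C (A 0 0) * X 0 + C (A 1 0) * X 1) * pderiv 0 f)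
    - ((C (A 0 1) * X 0 + C (A 1 1) * X 1) * pderiv 1 f)

/-- A linear form: a nonzero homogeneous degree-1 polynomial in `ℂ[x,y]`. -/
def IsLinForm (α : MvPolynomial (Fin 2) ℂ) : Prop := α ≠ 0 ∧ α.IsHomogeneous 1

section BinaryForms

variable {R : Type*} [CommRing R]

noncomputable def expXY (i j : ℕ) : Fin 2 →₀ ℕ := Finsupp.single 0 i + Finsupp.single 1 j

lemma eq_expXY (d : Fin 2 →₀ ℕ) : d = expXY (d 0) (d 1) := by
  ext i; fin_cases i <;> simp [expXY]

lemma expXY_inj {i j i' j' : ℕ} : expXY i j = expXY i' j' ↔ i = i' ∧ j = j' := by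
  refine ⟨fun h => ⟨?_, ?_⟩, fun ⟨hi, hj⟩ => hi ▸ hj ▸ rfl⟩
  · simpa [expXY] using DFunLike.congr_fun h 0
  · simpa [expXY] using DFunLike.congr_fun h 1

lemma degree_expXY (i j : ℕ) : (expXY i j).degree = i + j := by
  simp [expXY]

lemma monomial_expXY (i j : ℕ) (r : R) :
    monomial (expXY i j) r = C r * X 0 ^ i * X 1 ^ j := by
  simp [expXY, X_pow_eq_monomial, C_mul_monomial, monomial_mul]

noncomputable def quartic (c : Fin 5 → R) : MvPolynomial (Fin 2) R :=
  ∑ k : Fin 5, C (c k) * X 0 ^ (4 - (k : ℕ)) * X 1 ^ (k : ℕ)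

lemma isHomogeneous_quartic (c : Fin 5 → R) : (quartic c).IsHomogeneous 4 := by
  refine IsHomogeneous.sum _ _ _ fun k _ => ?_
  rw [← monomial_expXY]
  exact isHomogeneous_monomial _ (by simp [degree_expXY]; omega)

lemma coeff_quartic (c : Fin 5 → R) (k : Fin 5) :
    coeff (expXY (4 - k) k) (quartic c) = c k := by
  simp only [quartic, ← monomial_expXY, coeff_sum, coeff_monomial, expXY_inj]
  rw [Finset.sum_eq_single k (fun j _ hj => if_neg fun h => hj (Fin.ext h.2)) (by simp),
    if_pos ⟨rfl, rfl⟩]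

lemma quartic_injective : Function.Injective (quartic (R := R)) :=
  fun c c' h => funext fun k => by rw [← coeff_quartic c, h, coeff_quartic]

lemma quartic_smul (r : R) (c : Fin 5 → R) : quartic (r • c) = r • quartic c := by
  simp [quartic, Finset.smul_sum, smul_eq_C_mul, mul_assoc]

lemma MvPolynomial.IsHomogeneous.exists_eq_quartic {φ : MvPolynomial (Fin 2) R}
    (hφ : φ.IsHomogeneous 4) : ∃ c, φ = quartic c := by
  refine ⟨fun k => coeff (expXY (4 - k) k) φ, ?_⟩
  ext d
  by_cases hd : d.degree = 4
  · rw [eq_expXY d, degree_expXY] at hd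
    obtain ⟨k, rfl⟩ : ∃ k : Fin 5, d = expXY (4 - k) k :=
      ⟨⟨d 1, by omega⟩, by rw [← hd, Nat.add_sub_cancel]; exact eq_expXY d⟩
    rw [coeff_quartic]
  · rw [hφ.coeff_eq_zero hd, (isHomogeneous_quartic _).coeff_eq_zero hd]

noncomputable def linForm (p q : R) : MvPolynomial (Fin 2) R := C p * X 0 + C q * X 1

lemma isHomogeneous_linForm (p q : R) : (linForm p q).IsHomogeneous 1 :=
  (isHomogeneous_C_mul_X p 0).add (isHomogeneous_C_mul_X q 1)

def cubeMulCoeffs (p q r s : R) : Fin 5 → R :=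
  ![p ^ 3 * r, p ^ 3 * s + 3 * p ^ 2 * q * r, 3 * p ^ 2 * q * s + 3 * p * q ^ 2 * r,
    3 * p * q ^ 2 * s + q ^ 3 * r, q ^ 3 * s]

lemma quartic_cubeMulCoeffs (p q r s : R) :
    quartic (cubeMulCoeffs p q r s) = linForm p q ^ 3 * linForm r s := by
  simp [quartic, cubeMulCoeffs, linForm, Fin.sum_univ_five, map_ofNat]
  ring

def HasCubeFactor (c : Fin 5 → R) : Prop :=
  ∃ p q r s : R, cubeMulCoeffs p q r s = c

lemma HasCubeFactor.of_comp_rev {c : Fin 5 → R} (h : HasCubeFactor (c ∘ Fin.rev)) :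
    HasCubeFactor c := by
  obtain ⟨p, q, r, s, h⟩ := h
  refine ⟨q, p, s, r, funext fun k => ?_⟩
  have := congrFun h (Fin.rev k)
  fin_cases k <;>
    simp only [cubeMulCoeffs, Function.comp_apply, Fin.zero_eta, Fin.mk_one, Fin.reduceFinMk,
      Fin.reduceRev, Fin.rev_zero, Fin.reduceLast, Matrix.cons_val] at this ⊢ <;>
    linear_combination this

def quarticAct (A : Matrix (Fin 2) (Fin 2) R) (c : Fin 5 → R) : Fin 5 → R :=
  ![-(4 * A 0 0) * c 0 - A 0 1 * c 1,
    -(3 * A 0 0 + A 1 1) * c 1 - 4 * A 1 0 * c 0 - 2 * A 0 1 * c 2,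
    -(2 * A 0 0 + 2 * A 1 1) * c 2 - 3 * A 1 0 * c 1 - 3 * A 0 1 * c 3,
    -(A 0 0 + 3 * A 1 1) * c 3 - 2 * A 1 0 * c 2 - 4 * A 0 1 * c 4,
    -(4 * A 1 1) * c 4 - A 1 0 * c 3]

lemma quarticAct_submatrix_swap (A : Matrix (Fin 2) (Fin 2) R) (c : Fin 5 → R) :
    quarticAct (A.submatrix (Equiv.swap 0 1) (Equiv.swap 0 1)) (c ∘ Fin.rev) =
      quarticAct A c ∘ Fin.rev := by
  funext k
  fin_cases k <;>
    simp only [quarticAct, Function.comp_apply, Matrix.submatrix_apply, Equiv.swap_apply_left,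
      Equiv.swap_apply_right, Fin.zero_eta, Fin.mk_one, Fin.reduceFinMk, Fin.reduceRev,
      Fin.rev_zero, Fin.reduceLast, Matrix.cons_val] <;>
    ring

end BinaryForms

lemma sAct_quartic (A : Matrix (Fin 2) (Fin 2) ℂ) (c : Fin 5 → ℂ) :
    sAct A (quartic c) = quartic (quarticAct A c) := by
  simp [sAct, quartic, quarticAct, Fin.sum_univ_five, map_ofNat]
  ring

section WeightTwo

variable {K : Type*} [Field K] [CharZero K] {A : Matrix (Fin 2) (Fin 2) K} {c : Fin 5 → K}

lemma hasCubeFactor_of_quarticAct_eq_two_smul_of_ne_zero (hA : A.trace = 0)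
    (hb : A 0 1 ≠ 0) (h : quarticAct A c = (2 : K) • c) : HasCubeFactor c := by
  have E0 := congrFun h 0
  have E1 := congrFun h 1
  have E2 := congrFun h 2
  have E3 := congrFun h 3
  have E4 := congrFun h 4
  rw [Matrix.trace_fin_two, add_eq_zero_iff_eq_neg'] at hA
  simp only [quarticAct, hA, Matrix.cons_val, Pi.smul_apply, smul_eq_mul] at E0 E1 E2 E3 E4
  set a := A 0 0
  set b := A 0 1
  set e := A 1 0
  have H1 : b * c 1 = -(4 * a + 2) * c 0 := by linear_combination -E0
  have H2 : 2 * b ^ 2 * c 2 = (8 * a ^ 2 + 12 * a + 4 - 4 * b * e) * c 0 := by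
    linear_combination -b * E1 + (-2 * a - 2) * H1
  have H3 : 3 * b ^ 3 * c 3 =
      (-8 * a ^ 2 - 12 * a - 4 + 10 * b * e + 12 * a * b * e) * c 0 := by
    linear_combination -b ^ 2 * E2 - 3 * e * b * H1 - H2
  have H4 : 12 * b ^ 4 * c 4 = (-16 * a ^ 3 - 8 * a ^ 2 + 16 * a + 8 - 40 * a * b * e
      - 32 * b * e + 12 * b ^ 2 * e ^ 2) * c 0 := by
    linear_combination -3 * b ^ 3 * E3 + (2 * a - 2) * H3 - 3 * b * e * H2
  have key : (a ^ 2 + b * e - 1) * (4 * (a ^ 2 + b * e) - 1) * c 0 = 0 := by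
    linear_combination -3 / 4 * b ^ 4 * E4 + (4 * a - 2) / 16 * H4 - b * e / 4 * H3
  rcases mul_eq_zero.1 key with key | hc0
  rcases mul_eq_zero.1 key with hs | hs
  · refine ⟨b, -(a + 1), c 0 / b ^ 3, c 0 * (1 - a) / b ^ 4, funext fun k => ?_⟩
    fin_cases k <;>
      simp only [cubeMulCoeffs, Fin.zero_eta, Fin.mk_one, Fin.reduceFinMk, Matrix.cons_val] <;>
      field_simp
    · linear_combination -H1
    · linear_combination -(1 / 2) * H2 + 2 * c 0 * hs
    · linear_combination -(1 / 3) * H3 - (10 + 12 * a) / 3 * c 0 * hs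
    · linear_combination -(1 / 12) * H4 - (12 * (b * e + 1 - a ^ 2) - 40 * a - 32) / 12 * c 0 * hs
  · refine ⟨2 * b, -(2 * a + 1), c 0 / (8 * b ^ 3), -((2 * a + 1) * c 0) / (16 * b ^ 4),
      funext fun k => ?_⟩
    fin_cases k <;>
      simp only [cubeMulCoeffs, Fin.zero_eta, Fin.mk_one, Fin.reduceFinMk, Matrix.cons_val] <;>
      field_simp
    · ring
    · linear_combination -128 * H1
    · linear_combination -64 * H2 + 64 * c 0 * hs
    · linear_combination -(128 / 3) * H3 - 32 / 3 * (10 + 12 * a) * c 0 * hs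
    · linear_combination -(4 / 3) * H4 - (12 * b * e + 3 - 12 * a ^ 2 - 40 * a - 32) / 3 * c 0 * hs
  · simp only [hc0, mul_zero, mul_eq_zero, hb, pow_eq_zero_iff, OfNat.ofNat_ne_zero, ne_eq,
      not_false_eq_true, false_or] at H1 H2 H3 H4
    refine ⟨0, 0, 0, 0, funext fun k => ?_⟩
    fin_cases k <;> simp [cubeMulCoeffs, hc0, H1, H2, H3, H4]

lemma hasCubeFactor_of_quarticAct_eq_two_smul_of_diagonal (hA : A.trace = 0)
    (hb : A 0 1 = 0) (he : A 1 0 = 0) (h : quarticAct A c = (2 : K) • c) : HasCubeFactor c := by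
  have E0 := congrFun h 0
  have E1 := congrFun h 1
  have E2 := congrFun h 2
  have E3 := congrFun h 3
  have E4 := congrFun h 4
  rw [Matrix.trace_fin_two, add_eq_zero_iff_eq_neg'] at hA
  simp only [quarticAct, hA, hb, he, Matrix.cons_val, Pi.smul_apply, smul_eq_mul]
    at E0 E1 E2 E3 E4
  have hc2 : c 2 = 0 := by linear_combination -E2 / 2
  -- `cₖ ≠ 0` forces `A 0 0` to be `-1/2, -1, 1, 1/2` for `k = 0, 1, 3, 4` respectively
  have h03 : c 0 * c 3 = 0 := by linear_combination (-c 3 * E0 - 2 * c 0 * E3) / 6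
  have h04 : c 0 * c 4 = 0 := by linear_combination (-c 4 * E0 - c 0 * E4) / 4
  have h13 : c 1 * c 3 = 0 := by linear_combination (-c 3 * E1 - c 1 * E3) / 4
  have h14 : c 1 * c 4 = 0 := by linear_combination (-2 * c 4 * E1 - c 1 * E4) / 6
  simp only [mul_eq_zero] at h03 h04 h13 h14
  obtain ⟨hc0, hc1⟩ | ⟨hc3, hc4⟩ : (c 0 = 0 ∧ c 1 = 0) ∨ (c 3 = 0 ∧ c 4 = 0) := by
    tauto
  · refine ⟨0, 1, c 3, c 4, funext fun k => ?_⟩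
    fin_cases k <;> simp [cubeMulCoeffs, hc0, hc1, hc2]
  · refine ⟨1, 0, c 0, c 1, funext fun k => ?_⟩
    fin_cases k <;> simp [cubeMulCoeffs, hc2, hc3, hc4]

theorem hasCubeFactor_of_quarticAct_eq_two_smul (hA : A.trace = 0)
    (h : quarticAct A c = (2 : K) • c) : HasCubeFactor c := by
  by_cases hb : A 0 1 = 0
  swap
  · exact hasCubeFactor_of_quarticAct_eq_two_smul_of_ne_zero hA hb h
  by_cases he : A 1 0 = 0
  · exact hasCubeFactor_of_quarticAct_eq_two_smul_of_diagonal hA hb he h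
  set A' := A.submatrix (Equiv.swap 0 1) (Equiv.swap 0 1)
  have hA' : A'.trace = 0 := by
    rw [Matrix.trace_fin_two] at hA ⊢
    simpa [A', add_comm] using hA
  have h' : quarticAct A' (c ∘ Fin.rev) = (2 : K) • (c ∘ Fin.rev) := by
    rw [quarticAct_submatrix_swap, h]
    rfl
  exact HasCubeFactor.of_comp_rev <|
    hasCubeFactor_of_quarticAct_eq_two_smul_of_ne_zero hA' (by simpa [A'] using he) h'

end WeightTwo

/-- If a nonzero quartic binary form `φ` admits `C ∈ sl₂(ℂ)` with `C·φ = 2φ`, then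
`φ = α³β` for some linear forms `α, β`. -/
theorem quartic_with_weight_two_conformal (φ : MvPolynomial (Fin 2) ℂ)
    (hφ0 : φ ≠ 0) (hφ : φ.IsHomogeneous 4)
    (Cm : Matrix (Fin 2) (Fin 2) ℂ) (hC : Cm.trace = 0)
    (h : sAct Cm φ = (2 : ℂ) • φ) :
    ∃ α β : MvPolynomial (Fin 2) ℂ, IsLinForm α ∧ IsLinForm β ∧ φ = α ^ 3 * β := by
  obtain ⟨c, rfl⟩ := hφ.exists_eq_quartic
  have hc : quarticAct Cm c = (2 : ℂ) • c :=
    quartic_injective (by rw [← sAct_quartic, h, quartic_smul])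
  obtain ⟨p, q, r, s, rfl⟩ := hasCubeFactor_of_quarticAct_eq_two_smul hC hc
  rw [quartic_cubeMulCoeffs] at hφ0 ⊢
  exact ⟨linForm p q, linForm r s,
    ⟨ne_zero_pow three_ne_zero (left_ne_zero_of_mul hφ0), isHomogeneous_linForm p q⟩,
    ⟨right_ne_zero_of_mul hφ0, isHomogeneous_linForm r s⟩, rfl⟩
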